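/- Let f : ℝ^d → ℝ be differentiable with L-Lipschitz gradient. Then for all x, y, z ∈ ℝ^d and any μ ≥ 0 such that f is μ-strongly convex, ⟨z − y, ∇f(x)⟩ ≥ f(z) − f(y) + (μ/4)·‖y − z‖² − L·‖z − x‖². -/

import Mathlib

open scoped RealInnerProductSpace

lemma descent_aux {d : ℕ} (f : EuclideanSpace ℝ (Fin d) → ℝ)
    (g : EuclideanSpace ℝ (Fin d) → EuclideanSpace ℝ (Fin d)) (L : ℝ)
    (hgrad : ∀ x, HasGradientAt f (g x) x)
    (hLip : ∀ x y, ‖g x - g y‖ ≤ L * ‖x - y‖)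
    (x v : EuclideanSpace ℝ (Fin d)) :
    f (x + v) ≤ f x + ⟪g x, v⟫ + L / 2 * ‖v‖ ^ 2 := by
  have hgc : Continuous g := by
    have : LipschitzWith (Real.toNNReal L) g := by
      apply LipschitzWith.of_dist_le_mul
      intro a b
      rw [dist_eq_norm, dist_eq_norm]
      have h2 : L * ‖a - b‖ ≤ Real.toNNReal L * ‖a - b‖ :=
        mul_le_mul_of_nonneg_right (Real.le_coe_toNNReal L) (norm_nonneg _)
      exact (hLip a b).trans h2
    exact this.continuous
  set φ : ℝ → ℝ := fun t => f (x + t • v) with hφ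
  have hderiv : ∀ t : ℝ, HasDerivAt φ ⟪g (x + t • v), v⟫ t := by
    intro t
    have hline : HasDerivAt (fun t : ℝ => x + t • v) v t := by
      simpa using ((hasDerivAt_id t).smul_const v).const_add x
    have hf := (hgrad (x + t • v)).hasFDerivAt
    have := hf.comp_hasDerivAt t hline
    simp [InnerProductSpace.toDual] at this
    exact this
  have hcont : Continuous fun t : ℝ => ⟪g (x + t • v), v⟫ := by
    exact (hgc.comp (continuous_const.add (continuous_id.smul continuous_const))).inner continuous_const
  have hint : ∫ t in (0:ℝ)..1, ⟪g (x + t • v), v⟫ = φ 1 - φ 0 :=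
    intervalIntegral.integral_eq_sub_of_hasDerivAt (fun t _ => hderiv t)
      (hcont.intervalIntegrable 0 1)
  have hc2 : Continuous fun t : ℝ => ⟪g x, v⟫ + L * t * ‖v‖ ^ 2 :=
    continuous_const.add ((continuous_const.mul continuous_id).mul continuous_const)
  have hc3 : Continuous fun t : ℝ => L * t * ‖v‖ ^ 2 :=
    (continuous_const.mul continuous_id).mul continuous_const
  have hbound : ∫ t in (0:ℝ)..1, ⟪g (x + t • v), v⟫ ≤
      ∫ t in (0:ℝ)..1, (⟪g x, v⟫ + L * t * ‖v‖ ^ 2) := by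
    apply intervalIntegral.integral_mono_on (by norm_num)
      (hcont.intervalIntegrable 0 1)
      (hc2.intervalIntegrable 0 1)
    intro t ht
    have h1 : ⟪g (x + t • v) - g x, v⟫ ≤ ‖g (x + t • v) - g x‖ * ‖v‖ :=
      real_inner_le_norm _ _
    have h2 : ‖g (x + t • v) - g x‖ ≤ L * (t * ‖v‖) := by
      have := hLip (x + t • v) x
      simpa [norm_smul, abs_of_nonneg ht.1] using this
    have h3 : ‖g (x + t • v) - g x‖ * ‖v‖ ≤ L * (t * ‖v‖) * ‖v‖ :=
      mul_le_mul_of_nonneg_right h2 (norm_nonneg _)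
    have h4 : ⟪g (x + t • v), v⟫ = ⟪g x, v⟫ + ⟪g (x + t • v) - g x, v⟫ := by
      rw [inner_sub_left]; ring
    rw [h4]; nlinarith [h1.trans h3]
  have hval : ∫ t in (0:ℝ)..1, (⟪g x, v⟫ + L * t * ‖v‖ ^ 2) =
      ⟪g x, v⟫ + L / 2 * ‖v‖ ^ 2 := by
    rw [intervalIntegral.integral_add (continuous_const.intervalIntegrable 0 1)
      (hc3.intervalIntegrable 0 1)]
    simp [intervalIntegral.integral_mul_const, intervalIntegral.integral_const_mul,
      mul_assoc]
    ring
  have : φ 1 - φ 0 ≤ ⟪g x, v⟫ + L / 2 * ‖v‖ ^ 2 := by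
    rw [← hint]; rw [hval] at hbound; exact hbound
  have e1 : φ 1 = f (x + v) := by simp [hφ]
  have e0 : φ 0 = f x := by simp [hφ]
  rw [e1, e0] at this
  linarith

/-- If f is L-smooth and μ-strongly convex (μ ≥ 0), then
⟨z − y, ∇f(x)⟩ ≥ f(z) − f(y) + (μ/4)‖y − z‖² − L‖z − x‖². -/
theorem stmt1 {d : ℕ} (f : EuclideanSpace ℝ (Fin d) → ℝ)
    (g : EuclideanSpace ℝ (Fin d) → EuclideanSpace ℝ (Fin d)) (L μ : ℝ) (hμ : 0 ≤ μ)
    (hgrad : ∀ x, HasGradientAt f (g x) x)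
    (hLip : ∀ x y, ‖g x - g y‖ ≤ L * ‖x - y‖)
    (hSC : ∀ x y, f x + ⟪g x, y - x⟫ + μ / 2 * ‖y - x‖ ^ 2 ≤ f y)
    (x y z : EuclideanSpace ℝ (Fin d)) :
    f z - f y + μ / 4 * ‖y - z‖ ^ 2 - L * ‖z - x‖ ^ 2 ≤ ⟪z - y, g x⟫ := by

  rcases Nat.eq_zero_or_pos d with hd | hd
  · subst hd
    have hxy : y = z := Subsingleton.elim y z
    have hxz : z = x := Subsingleton.elim z x
    rw [hxy, hxz]
    simp
  · -- derive 0 ≤ L and μ ≤ L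
    have he : ‖(EuclideanSpace.single (⟨0, hd⟩ : Fin d) (1:ℝ))‖ = 1 := by
      simp [EuclideanSpace.norm_single]
    set e := EuclideanSpace.single (⟨0, hd⟩ : Fin d) (1:ℝ) with hedef
    have hL0 : 0 ≤ L := by
      have := hLip 0 e
      have h1 : ‖(0 : EuclideanSpace ℝ (Fin d)) - e‖ = 1 := by
        rw [zero_sub, norm_neg, he]
      rw [h1, mul_one] at this
      exact le_trans (norm_nonneg _) this
    have hμL : μ ≤ L := by
      have h1 := hSC 0 e
      have h2 := hSC e 0
      have hsum : ⟪g 0, e⟫ + ⟪g e, -e⟫ + μ * ‖e‖ ^ 2 ≤ 0 := by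
        have he1 : (e : EuclideanSpace ℝ (Fin d)) - 0 = e := by simp
        have he2 : (0 : EuclideanSpace ℝ (Fin d)) - e = -e := by simp
        rw [he1] at h1; rw [he2] at h2
        rw [norm_neg] at h2
        linarith
      rw [he] at hsum
      have hinner : ⟪g e - g 0, e⟫ ≤ ‖g e - g 0‖ * ‖e‖ := real_inner_le_norm _ _
      have hlip := hLip e 0
      rw [sub_zero, he] at hlip
      rw [he, mul_one] at hinner
      have hexp : ⟪g e - g 0, e⟫ = ⟪g e, e⟫ - ⟪g 0, e⟫ := inner_sub_left _ _ _
      have hne : ⟪g e, -e⟫ = -⟪g e, e⟫ := by rw [inner_neg_right]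
      rw [hne] at hsum
      nlinarith
    -- main argument
    have hdesc := descent_aux f g L hgrad hLip x (z - x)
    rw [add_sub_cancel] at hdesc
    have hsc := hSC x y
    have hsplit : ⟪g x, z - x⟫ - ⟪g x, y - x⟫ = ⟪g x, z - y⟫ := by
      rw [← inner_sub_right]
      congr 1
      abel
    have hcomm : ⟪z - y, g x⟫ = ⟪g x, z - y⟫ := real_inner_comm _ _
    have htri : ‖y - z‖ ≤ ‖y - x‖ + ‖x - z‖ := by
      have := norm_sub_le (y - x) (z - x)
      have heq : (y - x) - (z - x) = y - z := by abel
      rw [heq] at this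
      rw [← norm_neg (z - x)] at this
      have : ‖y - z‖ ≤ ‖y - x‖ + ‖-(z - x)‖ := this
      simpa [neg_sub] using this
    have hxz' : ‖x - z‖ = ‖z - x‖ := by rw [← norm_neg (x - z), neg_sub]
    rw [hxz'] at htri
    have hsq : ‖y - z‖ ^ 2 ≤ 2 * ‖y - x‖ ^ 2 + 2 * ‖z - x‖ ^ 2 := by
      nlinarith [sq_nonneg (‖y - x‖ - ‖z - x‖), htri, norm_nonneg (y - z), norm_nonneg (y - x), norm_nonneg (z - x)]
    rw [hcomm, ← hsplit]
    nlinarith [sq_nonneg (‖y - x‖), sq_nonneg (‖z - x‖)]
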